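/- For every n ≥ 1 and every subset ψ of the matrix of Φₙ, every clause of ψ is blocked in the QCNF with prefix ∀u₁∃e₁…∀uₙ∃eₙ and matrix ψ: the literal eᵢ is blocked in the clause ūᵢ∨eᵢ and the literal ēᵢ is blocked in the clause uᵢ∨ēᵢ. Consequently, iterated blocked-clause elimination reduces the matrix of Φₙ to the empty set of clauses. -/

import Mathlib

/-!
Framework for prenex QCNF: variables are natural numbers; a quantifier prefix is
given by `ex : Var → Bool` (`ex v = true` iff variable `v` is existential), and
the prefix order on variables (hence on literals) is `<` on ℕ.
-/

abbrev Var := ℕ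

/-- A literal: a variable together with a polarity (`pos = true` for `x`, `false` for `x̄`). -/
structure Lit where
  var : Var
  pos : Bool
deriving DecidableEq

/-- The complementary literal. -/
def Lit.neg (l : Lit) : Lit := ⟨l.var, !l.pos⟩

/-- Clauses (disjunctions) and terms (conjunctions) are finite sets of literals. -/
abbrev Clause := Finset Lit
abbrev Term := Finset Lit

/-- A set of literals contains no complementary pair. -/
def LitSetOk (C : Finset Lit) : Prop := ∀ l ∈ C, l.neg ∉ C

instance (C : Finset Lit) : Decidable (LitSetOk C) :=
  inferInstanceAs (Decidable (∀ l ∈ C, l.neg ∉ C))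

/-- The resOf on pivot literal `p` (used both for clauses and for terms). -/
def resOf (p : Lit) (A B : Finset Lit) : Finset Lit := A.erase p ∪ B.erase p.neg

/-- Resolution of `A` (containing `p`) with `B` (containing `p.neg`) is defined: the
union of the side literals contains no complementary pair and neither `p` nor `p.neg`. -/
def ResOk (p : Lit) (A B : Finset Lit) : Prop :=
  p ∈ A ∧ p.neg ∈ B ∧ p ∉ resOf p A B ∧ p.neg ∉ resOf p A B ∧
    LitSetOk (resOf p A B)

instance (p : Lit) (A B : Finset Lit) : Decidable (ResOk p A B) :=
  inferInstanceAs (Decidable (p ∈ A ∧ p.neg ∈ B ∧ p ∉ resOf p A B ∧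
    p.neg ∉ resOf p A B ∧ LitSetOk (resOf p A B)))

/-- ∀-reduction: `C'` results from `C` by removing every universal literal `l` such
that no existential literal `k ∈ C` satisfies `l < k`. -/
def IsForallReduct (ex : Var → Bool) (C C' : Clause) : Prop :=
  ∀ l : Lit, l ∈ C' ↔ l ∈ C ∧ (ex l.var = true ∨ ∃ k ∈ C, ex k.var = true ∧ l.var < k.var)

/-- QU-resolution proofs of a clause from the matrix `φ` under the prefix `ex`:
every clause is in `φ`, or a QU-resOf of two earlier clauses (the pivot may be
universal), or results from an earlier clause by ∀-reduction. -/
inductive QUProof (ex : Var → Bool) (φ : Finset Clause) : Clause → Prop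
  | ax {C : Clause} : C ∈ φ → QUProof ex φ C
  | res {A B : Clause} {p : Lit} : QUProof ex φ A → QUProof ex φ B → ResOk p A B →
      QUProof ex φ (resOf p A B)
  | red {C C' : Clause} : QUProof ex φ C → IsForallReduct ex C C' → QUProof ex φ C'

/-- ∃-reduction: `T'` results from `T` by removing every existential literal `l` such
that no universal literal `k ∈ T` satisfies `l < k`. -/
def IsExistsReduct (ex : Var → Bool) (T T' : Term) : Prop :=
  ∀ l : Lit, l ∈ T' ↔ l ∈ T ∧ (ex l.var = false ∨ ∃ k ∈ T, ex k.var = false ∧ l.var < k.var)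

/-- Model generation rule: `T` is generated from the matrix `φ` if every clause of `φ`
contains a literal belonging to `T`. -/
def ModelGen (φ : Finset Clause) (T : Term) : Prop := ∀ C ∈ φ, ∃ l ∈ C, l ∈ T

/-- `π` is a term-resolution proof of the term `T` from the QCNF with prefix `ex` and
matrix `φ`: a finite sequence of terms ending in `T`, each generated by model
generation or obtained from earlier terms by ∃-reduction or term-resolution. -/
def IsTermResProof (ex : Var → Bool) (φ : Finset Clause) (π : List Term) (T : Term) : Prop :=
  π ≠ [] ∧ π.getLast? = some T ∧
    ∀ i : Fin π.length, LitSetOk (π.get i) ∧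
      (ModelGen φ (π.get i) ∨
        (∃ j : Fin π.length, j < i ∧ IsExistsReduct ex (π.get j) (π.get i)) ∨
        (∃ j k : Fin π.length, j < i ∧ k < i ∧ ∃ p : Lit,
          ResOk p (π.get j) (π.get k) ∧ π.get i = resOf p (π.get j) (π.get k)))

/-- Value of a literal under a total assignment. -/
def evalLit (σ : Var → Bool) (l : Lit) : Bool := if l.pos then σ l.var else !σ l.var

/-- A strategy assigns to each (existential) variable a Boolean function of the
universal assignment — the semantic counterpart of a propositional formula. -/
abbrev Strategy := Var → (Var → Bool) → Bool

/-- The total assignment induced by a strategy `M` and a universal assignment `τ`. -/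
def Strategy.assign (ex : Var → Bool) (M : Strategy) (τ : Var → Bool) : Var → Bool :=
  fun v => if ex v then M v τ else τ v

/-- The definition of each existential variable depends only on the universal
variables preceding it in the prefix. -/
def WellFormed (ex : Var → Bool) (M : Strategy) : Prop :=
  ∀ e, ex e = true → ∀ τ τ' : Var → Bool,
    (∀ u, ex u = false → u < e → τ u = τ' u) → M e τ = M e τ'

/-- `M` is a model of the QCNF with prefix `ex` and matrix `φ`: it is a well-formed
strategy and `M(φ)` is a tautology. -/
def IsModel (ex : Var → Bool) (φ : Finset Clause) (M : Strategy) : Prop :=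
  WellFormed ex M ∧
    ∀ τ : Var → Bool, ∀ C ∈ φ, ∃ l ∈ C, evalLit (Strategy.assign ex M τ) l = true

/-- A term `T` agrees with an assignment `τ` to the universal variables iff there is
no (universal) literal `l` with `l̄ ∈ T` and `τ(l) = 1`. -/
def Agrees (ex : Var → Bool) (τ : Var → Bool) (T : Term) : Prop :=
  ¬∃ l : Lit, ex l.var = false ∧ l.neg ∈ T ∧ evalLit τ l = true

/-- Edge `a → b` of the binary implication graph of `φ`: the binary clause
`a.neg ∨ b` is in `φ` (a clause `l₁ ∨ l₂` yields the edges `l̄₁ → l₂`, `l̄₂ → l₁`). -/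
def ImpEdge (φ : Finset Clause) (a b : Lit) : Prop :=
  a ≠ b ∧ a.neg ≠ b ∧ ({a.neg, b} : Clause) ∈ φ

/-- The existential literal `l` of the clause `C` is blocked in the matrix `φ`. -/
def BlockedIn (ex : Var → Bool) (φ : Finset Clause) (C : Clause) (l : Lit) : Prop :=
  ex l.var = true ∧ l ∈ C ∧ ∀ D ∈ φ, l.neg ∈ D → ∃ k ∈ C, k.var < l.var ∧ k.neg ∈ D

/-- One step of blocked clause elimination: remove one blocked clause. -/
def BCEStep (ex : Var → Bool) (φ φ' : Finset Clause) : Prop :=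
  ∃ C ∈ φ, (∃ l, BlockedIn ex φ C l) ∧ φ' = φ.erase C

/-- The side-condition for eliminating the existential variable `x` from the matrix `φ`. -/
def VEside (x : Var) (φ : Finset Clause) : Prop :=
  ∀ C ∈ φ, (⟨x, true⟩ : Lit) ∈ C → (∃ k ∈ C, x < k.var) →
    ∀ D ∈ φ, (⟨x, false⟩ : Lit) ∈ D → ∃ z ∈ C, z.var < x ∧ z.neg ∈ D

/-- The set of all defined resolvents on `x` between the clauses of `φ` containing the
literal `x` and those containing `x̄`. -/
def VEresolvents (x : Var) (φ : Finset Clause) : Finset Clause :=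
  ((φ ×ˢ φ).filter fun q => ResOk ⟨x, true⟩ q.1 q.2).image
    fun q => resOf ⟨x, true⟩ q.1 q.2

/-- Variable elimination of `x`: replace all clauses mentioning `x` by all defined
resolvents on `x`. -/
def VEapply (x : Var) (φ : Finset Clause) : Finset Clause :=
  φ.filter (fun C => (⟨x, true⟩ : Lit) ∉ C ∧ (⟨x, false⟩ : Lit) ∉ C) ∪ VEresolvents x φ

/-- The variables of Φₙ (0-indexed): `uᵢ` is variable `2*i`, `eᵢ` is variable `2*i+1`,
so the prefix `∀u₀∃e₀…∀u_{n-1}∃e_{n-1}` is the natural order. -/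
def uLit (i : ℕ) (b : Bool) : Lit := ⟨2 * i, b⟩
def eLit (i : ℕ) (b : Bool) : Lit := ⟨2 * i + 1, b⟩

/-- The prefix of Φₙ: even variables universal, odd variables existential. -/
def phiEx : Var → Bool := fun v => v % 2 == 1

/-- The clause `ūᵢ ∨ eᵢ`. -/
def posClause (i : ℕ) : Clause := {uLit i false, eLit i true}
/-- The clause `uᵢ ∨ ēᵢ`. -/
def negClause (i : ℕ) : Clause := {uLit i true, eLit i false}

/-- The matrix of Φₙ: `⋀_{i<n} (ūᵢ ∨ eᵢ) ∧ (uᵢ ∨ ēᵢ)`. -/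
def PhiMatrix (n : ℕ) : Finset Clause :=
  (Finset.range n).biUnion fun i => {posClause i, negClause i}

/-- The set `W` of witnesses for the literal `l` being blocked in the clause `C`. -/
def witnesses (φ : Finset Clause) (C : Clause) (l : Lit) : Finset Lit :=
  C.filter fun k => k ≠ l ∧ k.var < l.var ∧ ∃ D ∈ φ, k.neg ∈ D ∧ l.neg ∈ D

/-- `φ` with all literals not less than `x` deleted from each clause. -/
def restrictBelow (x : Var) (φ : Finset Clause) : Finset Clause :=
  φ.image fun C => C.filter fun l => l.var < x
/-!
Every clause of Φₙ that contains `eᵢ^c` also contains `uᵢ^(¬c)`. So every resolution partner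
of `eᵢ^b` in the clause `uᵢ^(¬b) ∨ eᵢ^b` contains `uᵢ^b`, the complement of the smaller literal
of that clause. This persists in every submatrix, so blocked clause elimination can remove
the clauses one at a time.
-/

def phiClause (i : ℕ) (b : Bool) : Clause := {uLit i (!b), eLit i b}

lemma posClause_eq_phiClause (i : ℕ) : posClause i = phiClause i true := rfl

lemma negClause_eq_phiClause (i : ℕ) : negClause i = phiClause i false := rfl

lemma mem_PhiMatrix {n : ℕ} {C : Clause} :
    C ∈ PhiMatrix n ↔ ∃ i < n, ∃ b, C = phiClause i b := by
  simp only [PhiMatrix, Finset.mem_biUnion, Finset.mem_range, Finset.mem_insert,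
    Finset.mem_singleton, posClause_eq_phiClause, negClause_eq_phiClause,
    Bool.exists_bool, or_comm]

lemma uLit_ne_eLit (i j : ℕ) (b c : Bool) : uLit i b ≠ eLit j c := fun h => by
  have h_var : 2 * i = 2 * j + 1 := congrArg Lit.var h
  omega

lemma eLit_inj {i j : ℕ} {b c : Bool} : eLit i b = eLit j c ↔ i = j ∧ b = c := by
  simp [eLit]

lemma uLit_neg (i : ℕ) (b : Bool) : (uLit i b).neg = uLit i (!b) := rfl

lemma eLit_neg (i : ℕ) (b : Bool) : (eLit i b).neg = eLit i (!b) := rfl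

lemma uLit_mem_of_eLit_mem {n i : ℕ} {b : Bool} {D : Clause} (hD : D ∈ PhiMatrix n)
    (he : eLit i b ∈ D) : uLit i (!b) ∈ D := by
  obtain ⟨j, -, c, rfl⟩ := mem_PhiMatrix.mp hD
  simp only [phiClause, Finset.mem_insert, Finset.mem_singleton, eLit_inj] at he ⊢
  rcases he with h | ⟨rfl, rfl⟩
  · exact absurd h.symm (uLit_ne_eLit _ _ _ _)
  · exact Or.inl rfl

lemma blockedIn_of_forall_neg_mem {ex : Var → Bool} {φ : Finset Clause} {C : Clause}
    {k l : Lit} (hl : ex l.var = true) (hlC : l ∈ C) (hkC : k ∈ C) (hkl : k.var < l.var)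
    (h : ∀ D ∈ φ, l.neg ∈ D → k.neg ∈ D) : BlockedIn ex φ C l :=
  ⟨hl, hlC, fun D hD hlD => ⟨k, hkC, hkl, h D hD hlD⟩⟩

lemma blockedIn_phiClause {n : ℕ} {ψ : Finset Clause} (hψ : ψ ⊆ PhiMatrix n) (i : ℕ)
    (b : Bool) : BlockedIn phiEx ψ (phiClause i b) (eLit i b) := by
  refine blockedIn_of_forall_neg_mem (k := uLit i (!b)) ?_ ?_ ?_ ?_ fun D hD hneg => ?_
  · simp [phiEx, eLit]
  · simp [phiClause]
  · simp [phiClause]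
  · simp [uLit, eLit]
  · rw [eLit_neg] at hneg
    simpa [uLit_neg] using uLit_mem_of_eLit_mem (hψ hD) hneg

lemma exists_blockedIn_of_subset_PhiMatrix {n : ℕ} {ψ : Finset Clause}
    (hψ : ψ ⊆ PhiMatrix n) : ∀ C ∈ ψ, ∃ l ∈ C, BlockedIn phiEx ψ C l := by
  intro C hC
  obtain ⟨i, -, b, rfl⟩ := mem_PhiMatrix.mp (hψ hC)
  exact ⟨eLit i b, by simp [phiClause], blockedIn_phiClause hψ i b⟩

lemma reflTransGen_bceStep_empty {ex : Var → Bool} {φ : Finset Clause}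
    (h : ∀ ψ ⊆ φ, ∀ C ∈ ψ, ∃ l, BlockedIn ex ψ C l) :
    Relation.ReflTransGen (BCEStep ex) φ ∅ := by
  induction φ using Finset.strongInduction with
  | H φ ih =>
    rcases φ.eq_empty_or_nonempty with rfl | ⟨C, hC⟩
    · exact .refl
    · refine .head ⟨C, hC, h φ subset_rfl C hC, rfl⟩ (ih _ (Finset.erase_ssubset hC) ?_)
      exact fun ψ hψ => h ψ (hψ.trans (Finset.erase_subset C φ))

theorem stmt4_general (n : ℕ) (ψ : Finset Clause) (hψ : ψ ⊆ PhiMatrix n) :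
    (∀ C ∈ ψ, ∃ l ∈ C, BlockedIn phiEx ψ C l) ∧
    (∀ i < n, posClause i ∈ ψ → BlockedIn phiEx ψ (posClause i) (eLit i true)) ∧
    (∀ i < n, negClause i ∈ ψ → BlockedIn phiEx ψ (negClause i) (eLit i false)) ∧
    Relation.ReflTransGen (BCEStep phiEx) (PhiMatrix n) ∅ :=
  ⟨exists_blockedIn_of_subset_PhiMatrix hψ,
    fun i _ _ => blockedIn_phiClause hψ i true,
    fun i _ _ => blockedIn_phiClause hψ i false,
    reflTransGen_bceStep_empty fun _ hψ' C hC =>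
      (exists_blockedIn_of_subset_PhiMatrix hψ' C hC).imp fun _ => And.right⟩

theorem stmt4 (n : ℕ) (hn : 1 ≤ n) (ψ : Finset Clause) (hψ : ψ ⊆ PhiMatrix n) :
    (∀ C ∈ ψ, ∃ l ∈ C, BlockedIn phiEx ψ C l) ∧
    (∀ i < n, posClause i ∈ ψ → BlockedIn phiEx ψ (posClause i) (eLit i true)) ∧
    (∀ i < n, negClause i ∈ ψ → BlockedIn phiEx ψ (negClause i) (eLit i false)) ∧
    Relation.ReflTransGen (BCEStep phiEx) (PhiMatrix n) ∅ :=
  stmt4_general n ψ hψ
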